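/- arXiv:2508.04137 — 6 statements merged into one kernel-verified Lean document; each statement's English description precedes it below -/
import Mathlib

section
/- Let n ≥ 3 be an odd integer. Then the Cartesian product C_n □ C_n is isomorphic to the Kronecker product C_n ⊗ C_n. -/
/-! The map `(x, y) ↦ (x + y, x - y)` is a bijection of `(ℤ/nℤ)²` because `2` is invertible
modulo odd `n`, and it carries the Cartesian steps `(±1, 0)`, `(0, ±1)` exactly onto the
Kronecker steps `(±1, ±1)`. -/

open SimpleGraph

/-- The cycle graph `C_n` on `ℤ/nℤ`: `i` adjacent to `j` iff `i - j ≡ ±1 (mod n)`. -/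
def cycleG (n : ℕ) : SimpleGraph (ZMod n) where
  Adj i j := i ≠ j ∧ (i - j = 1 ∨ j - i = 1)
  symm := ⟨fun _ _ h => ⟨h.1.symm, h.2.symm⟩⟩
  loopless := ⟨fun _ h => h.1 rfl⟩

/-- Cartesian product of graphs. -/
def cartProd {α β : Type*} (G : SimpleGraph α) (H : SimpleGraph β) : SimpleGraph (α × β) where
  Adj p q := (G.Adj p.1 q.1 ∧ p.2 = q.2) ∨ (p.1 = q.1 ∧ H.Adj p.2 q.2)
  symm := ⟨fun _ _ h => h.imp (fun h => ⟨h.1.symm, h.2.symm⟩) (fun h => ⟨h.1.symm, h.2.symm⟩)⟩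
  loopless := ⟨fun _ h => h.elim (fun h => G.loopless.irrefl _ h.1) (fun h => H.loopless.irrefl _ h.2)⟩

/-- Kronecker (tensor/direct) product of graphs. -/
def tensorProd {α β : Type*} (G : SimpleGraph α) (H : SimpleGraph β) : SimpleGraph (α × β) where
  Adj p q := G.Adj p.1 q.1 ∧ H.Adj p.2 q.2
  symm := ⟨fun _ _ h => ⟨h.1.symm, h.2.symm⟩⟩
  loopless := ⟨fun _ h => G.loopless.irrefl _ h.1⟩

/-- Strong product of graphs. -/
def strongProd {α β : Type*} (G : SimpleGraph α) (H : SimpleGraph β) : SimpleGraph (α × β) where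
  Adj p q := (G.Adj p.1 q.1 ∧ p.2 = q.2) ∨ (p.1 = q.1 ∧ H.Adj p.2 q.2) ∨
    (G.Adj p.1 q.1 ∧ H.Adj p.2 q.2)
  symm := ⟨fun _ _ h => h.imp (fun h => ⟨h.1.symm, h.2.symm⟩)
    (fun h => h.imp (fun h => ⟨h.1.symm, h.2.symm⟩) (fun h => ⟨h.1.symm, h.2.symm⟩))⟩
  loopless := ⟨fun _ h => h.elim (fun h => G.loopless.irrefl _ h.1)
    (fun h => h.elim (fun h => H.loopless.irrefl _ h.2) (fun h => G.loopless.irrefl _ h.1))⟩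

/-- Lexicographic product of graphs. -/
def lexProd {α β : Type*} (G : SimpleGraph α) (H : SimpleGraph β) : SimpleGraph (α × β) where
  Adj p q := G.Adj p.1 q.1 ∨ (p.1 = q.1 ∧ H.Adj p.2 q.2)
  symm := ⟨fun _ _ h => h.imp (fun h => h.symm) (fun h => ⟨h.1.symm, h.2.symm⟩)⟩
  loopless := ⟨fun _ h => h.elim (fun h => G.loopless.irrefl _ h) (fun h => H.loopless.irrefl _ h.2)⟩

section SumDiff

variable {R : Type*} [CommRing R]

noncomputable def sumDiffEquiv (h2 : IsUnit (2 : R)) : R × R ≃ R × R where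
  toFun p := (p.1 + p.2, p.1 - p.2)
  invFun p := (↑h2.unit⁻¹ * (p.1 + p.2), ↑h2.unit⁻¹ * (p.1 - p.2))
  left_inv p := by
    ext
    · linear_combination p.1 * h2.val_inv_mul
    · linear_combination p.2 * h2.val_inv_mul
  right_inv p := by
    ext
    · linear_combination p.1 * h2.val_inv_mul
    · linear_combination p.2 * h2.val_inv_mul

theorem sumDiffEquiv_apply (h2 : IsUnit (2 : R)) (p : R × R) :
    sumDiffEquiv h2 p = (p.1 + p.2, p.1 - p.2) := rfl

theorem sum_diff_pm_one_iff (h2 : IsUnit (2 : R)) (a b : R) :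
    ((a + b = 1 ∨ a + b = -1) ∧ (a - b = 1 ∨ a - b = -1)) ↔
      ((a = 1 ∨ a = -1) ∧ b = 0 ∨ a = 0 ∧ (b = 1 ∨ b = -1)) := by
  have cancel {c d : R} (h : 2 * c = 2 * d) : c = d := h2.mul_left_cancel h
  constructor
  · rintro ⟨hs | hs, hd | hd⟩
    · exact Or.inl ⟨Or.inl (cancel (by linear_combination hs + hd)),
        cancel (by linear_combination hs - hd)⟩
    · exact Or.inr ⟨cancel (by linear_combination hs + hd),
        Or.inl (cancel (by linear_combination hs - hd))⟩
    · exact Or.inr ⟨cancel (by linear_combination hs + hd),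
        Or.inr (cancel (by linear_combination hs - hd))⟩
    · exact Or.inl ⟨Or.inr (cancel (by linear_combination hs + hd)),
        cancel (by linear_combination hs - hd)⟩
  · rintro (⟨rfl | rfl, rfl⟩ | ⟨rfl, rfl | rfl⟩) <;> norm_num

end SumDiff

theorem cycleG_adj_iff {n : ℕ} [Fact (1 < n)] {i j : ZMod n} :
    (cycleG n).Adj i j ↔ i - j = 1 ∨ i - j = -1 := by
  have hji : j - i = 1 ↔ i - j = -1 := by rw [← neg_sub, neg_eq_iff_eq_neg]
  simp only [cycleG, hji, and_iff_right_iff_imp]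
  rintro (h | h) rfl <;> simp at h

theorem cartProd_cycleG_adj_iff {n : ℕ} [Fact (1 < n)] {p q : ZMod n × ZMod n} :
    (cartProd (cycleG n) (cycleG n)).Adj p q ↔
      ((p.1 - q.1 = 1 ∨ p.1 - q.1 = -1) ∧ p.2 - q.2 = 0 ∨
        p.1 - q.1 = 0 ∧ (p.2 - q.2 = 1 ∨ p.2 - q.2 = -1)) := by
  simp only [cartProd, cycleG_adj_iff, sub_eq_zero]

theorem tensorProd_cycleG_adj_iff {n : ℕ} [Fact (1 < n)] {p q : ZMod n × ZMod n} :
    (tensorProd (cycleG n) (cycleG n)).Adj p q ↔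
      (p.1 - q.1 = 1 ∨ p.1 - q.1 = -1) ∧ (p.2 - q.2 = 1 ∨ p.2 - q.2 = -1) := by
  simp only [tensorProd, cycleG_adj_iff]

noncomputable def cartProdCycleGIsoTensorProd {n : ℕ} [Fact (1 < n)] (h2 : IsUnit (2 : ZMod n)) :
    cartProd (cycleG n) (cycleG n) ≃g tensorProd (cycleG n) (cycleG n) where
  toEquiv := sumDiffEquiv h2
  map_rel_iff' {p q} := by
    have hsum : p.1 + p.2 - (q.1 + q.2) = (p.1 - q.1) + (p.2 - q.2) := by ring
    have hdiff : p.1 - p.2 - (q.1 - q.2) = (p.1 - q.1) - (p.2 - q.2) := by ring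
    rw [tensorProd_cycleG_adj_iff, cartProd_cycleG_adj_iff, sumDiffEquiv_apply, sumDiffEquiv_apply,
      hsum, hdiff]
    exact sum_diff_pm_one_iff h2 _ _

theorem stmt_1 (n : ℕ) (hn : 3 ≤ n) (hodd : Odd n) :
    Nonempty (cartProd (cycleG n) (cycleG n) ≃g tensorProd (cycleG n) (cycleG n)) := by
  have : Fact (1 < n) := ⟨by omega⟩
  have h2 : IsUnit (2 : ZMod n) := by
    exact_mod_cast (ZMod.isUnit_iff_coprime 2 n).mpr (Nat.coprime_two_left.mpr hodd)
  exact ⟨cartProdCycleGIsoTensorProd h2⟩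
end

section
/- Let n ≥ 3 be an odd integer and regard the vertices of the cycle C_n as elements of ℤ/nℤ. The bijection f_n(l, m) = (l + m − 1, 1 − l + m) (arithmetic in ℤ/nℤ) maps edges of C_n □ C_n to edges of C_n ⊗ C_n: if (l,m) and (i,j) are adjacent in C_n □ C_n, then f_n(l,m) and f_n(i,j) are adjacent in C_n ⊗ C_n. -/
open SimpleGraph

theorem cycleG_adj_of_sub_eq {n : ℕ} {a b c d : ZMod n} (hab : (cycleG n).Adj a b)
    (h : a - b = c - d) : (cycleG n).Adj c d := by
  obtain ⟨hne, hdiff⟩ := hab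
  refine ⟨fun hcd => hne (sub_eq_zero.mp (h.trans (sub_eq_zero.mpr hcd))), ?_⟩
  rwa [← neg_sub a b, h, neg_sub] at hdiff

theorem stmt_3_general (n : ℕ) (l m i j : ZMod n)
    (h : (cartProd (cycleG n) (cycleG n)).Adj (l, m) (i, j)) :
    (tensorProd (cycleG n) (cycleG n)).Adj (l + m - 1, 1 - l + m) (i + j - 1, 1 - i + j) := by
  rcases h with ⟨hli, rfl⟩ | ⟨rfl, hmj⟩
  · exact ⟨cycleG_adj_of_sub_eq hli (by ring), cycleG_adj_of_sub_eq hli.symm (by ring)⟩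
  · exact ⟨cycleG_adj_of_sub_eq hmj (by ring), cycleG_adj_of_sub_eq hmj (by ring)⟩

theorem stmt_3 (n : ℕ) (hn : 3 ≤ n) (hodd : Odd n) (l m i j : ZMod n)
    (h : (cartProd (cycleG n) (cycleG n)).Adj (l, m) (i, j)) :
    (tensorProd (cycleG n) (cycleG n)).Adj (l + m - 1, 1 - l + m) (i + j - 1, 1 - i + j) :=
  stmt_3_general n l m i j h
end

section
/- Let G and H be finite simple connected graphs, each with at least two vertices. If the minimum degree δ(G) of G is not equal to 2, or the maximum degree Δ(G) of G is not equal to 2, then the Cartesian product G □ H and the Kronecker product G ⊗ H are not isomorphic. (In particular, if at least one of G and H is not a cycle, the two products are not isomorphic.) -/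
open SimpleGraph

/-!
Degrees add in `G □ H` and multiply in `G ⊗ H`, so an isomorphism forces
`δ(G) + δ(H) = δ(G) δ(H)` and `Δ(G) + Δ(H) = Δ(G) Δ(H)`. Since `G` is connected and nontrivial,
`0 < δ(G) ≤ Δ(G)`, and `m + n = m n` with `m > 0` only holds for `m = n = 2`.
-/

lemma Nat.eq_two_of_add_eq_mul {m n : ℕ} (hm : 0 < m) (h : m + n = m * n) : m = 2 ∧ n = 2 := by
  obtain ⟨m, rfl⟩ := Nat.exists_eq_add_one_of_ne_zero hm.ne'
  obtain _ | n := n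
  · simp at h
  have : m * n = 1 := by linarith
  rw [mul_eq_one] at this
  omega

namespace SimpleGraph

variable {α β : Type}

section Degree

variable [Fintype α] [Fintype β] [Nonempty α] [Nonempty β] {G : SimpleGraph α}
  {H : SimpleGraph β} [DecidableRel G.Adj] [DecidableRel H.Adj] {K : SimpleGraph (α × β)}
  [DecidableRel K.Adj] {f : ℕ → ℕ → ℕ}

lemma minDegree_eq_of_degree_eq (hf : ∀ ⦃a a' b b'⦄, a ≤ a' → b ≤ b' → f a b ≤ f a' b')
    (hK : ∀ x y, K.degree (x, y) = f (G.degree x) (H.degree y)) :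
    K.minDegree = f G.minDegree H.minDegree := by
  obtain ⟨x, hx⟩ := G.exists_minimal_degree_vertex
  obtain ⟨y, hy⟩ := H.exists_minimal_degree_vertex
  refine le_antisymm (hx ▸ hy ▸ hK x y ▸ K.minDegree_le_degree (x, y)) ?_
  refine K.le_minDegree_of_forall_le_degree _ fun ⟨x, y⟩ ↦ hK x y ▸ ?_
  exact hf (G.minDegree_le_degree x) (H.minDegree_le_degree y)

lemma maxDegree_eq_of_degree_eq (hf : ∀ ⦃a a' b b'⦄, a ≤ a' → b ≤ b' → f a b ≤ f a' b')
    (hK : ∀ x y, K.degree (x, y) = f (G.degree x) (H.degree y)) :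
    K.maxDegree = f G.maxDegree H.maxDegree := by
  obtain ⟨x, hx⟩ := G.exists_maximal_degree_vertex
  obtain ⟨y, hy⟩ := H.exists_maximal_degree_vertex
  refine le_antisymm ?_ (hx ▸ hy ▸ hK x y ▸ K.degree_le_maxDegree (x, y))
  refine K.maxDegree_le_of_forall_degree_le _ fun ⟨x, y⟩ ↦ hK x y ▸ ?_
  exact hf (G.degree_le_maxDegree x) (H.degree_le_maxDegree y)

end Degree

variable (G : SimpleGraph α) (H : SimpleGraph β)

def cartProdIsoBoxProd : cartProd G H ≃g G □ H where
  toEquiv := Equiv.refl _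
  map_rel_iff' := by
    simp only [Equiv.refl_apply, boxProd_adj, cartProd]
    tauto

variable [Fintype α] [Fintype β] [DecidableRel G.Adj] [DecidableRel H.Adj]

lemma cartProd_degree [DecidableRel (cartProd G H).Adj] (x : α) (y : β) :
    (cartProd G H).degree (x, y) = G.degree x + H.degree y := by
  classical
  rw [← (cartProdIsoBoxProd G H).degree_eq, degree_boxProd]
  rfl

lemma tensorProd_neighborFinset [DecidableRel (tensorProd G H).Adj] (x : α) (y : β) :
    (tensorProd G H).neighborFinset (x, y) = G.neighborFinset x ×ˢ H.neighborFinset y := by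
  ext
  simp only [mem_neighborFinset, Finset.mem_product]
  rfl

lemma tensorProd_degree [DecidableRel (tensorProd G H).Adj] (x : α) (y : β) :
    (tensorProd G H).degree (x, y) = G.degree x * H.degree y := by
  rw [← card_neighborFinset_eq_degree, tensorProd_neighborFinset, Finset.card_product]
  rfl

end SimpleGraph

theorem stmt_4_general {α β : Type} [Fintype α] [Fintype β] [Nontrivial α] [Nontrivial β]
    (G : SimpleGraph α) (H : SimpleGraph β) [DecidableRel G.Adj]
    (hG : G.Connected)
    (hdeg : G.minDegree ≠ 2 ∨ G.maxDegree ≠ 2) :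
    ¬ Nonempty (cartProd G H ≃g tensorProd G H) := by
  classical
  rintro ⟨f⟩
  have hmin := f.minDegree_eq
  have hmax := f.maxDegree_eq
  rw [minDegree_eq_of_degree_eq (fun _ _ _ _ ↦ Nat.add_le_add) (cartProd_degree G H),
    minDegree_eq_of_degree_eq (fun _ _ _ _ ↦ Nat.mul_le_mul) (tensorProd_degree G H)] at hmin
  rw [maxDegree_eq_of_degree_eq (fun _ _ _ _ ↦ Nat.add_le_add) (cartProd_degree G H),
    maxDegree_eq_of_degree_eq (fun _ _ _ _ ↦ Nat.mul_le_mul) (tensorProd_degree G H)] at hmax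
  have hpos : 0 < G.minDegree := hG.preconnected.minDegree_pos_of_nontrivial
  obtain ⟨hmin2, -⟩ := Nat.eq_two_of_add_eq_mul hpos hmin
  obtain ⟨hmax2, -⟩ := Nat.eq_two_of_add_eq_mul (hpos.trans_le G.minDegree_le_maxDegree) hmax
  exact hdeg.elim (· hmin2) (· hmax2)

theorem stmt_4 {α β : Type} [Fintype α] [Fintype β] [Nontrivial α] [Nontrivial β]
    (G : SimpleGraph α) (H : SimpleGraph β) [DecidableRel G.Adj]
    (hG : G.Connected) (hH : H.Connected)
    (hdeg : G.minDegree ≠ 2 ∨ G.maxDegree ≠ 2) :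
    ¬ Nonempty (cartProd G H ≃g tensorProd G H) :=
  stmt_4_general G H hG hdeg
end

section
/- Let G and H be finite simple connected graphs, each with at least two vertices. Then the Cartesian product G □ H and the lexicographic product G ∘ H are not isomorphic. -/
/-!
Count edges. `G □ H` has `|E(G)|·|V(H)| + |V(G)|·|E(H)|` edges, while in `G ∘ H` every edge of `G`
joins two whole copies of `H`, giving `|E(G)|·|V(H)|² + |V(G)|·|E(H)|` edges. A connected graph on
at least two vertices has an edge, and `|V(H)| < |V(H)|²`, so the two counts differ.
-/

open SimpleGraph

open Finset

lemma SimpleGraph.Preconnected.card_edgeFinset_pos {V : Type*} [Fintype V] [Nontrivial V]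
    {G : SimpleGraph V} [DecidableRel G.Adj] (hG : G.Preconnected) : 0 < #G.edgeFinset := by
  obtain ⟨x⟩ : Nonempty V := inferInstance
  obtain ⟨y, hxy⟩ := hG.exists_adj_of_nontrivial x
  exact card_pos.2 (edgeFinset_nonempty.2 (ne_bot_iff_exists_adj.2 ⟨x, y, hxy⟩))

section Adj

variable {α β : Type*} (G : SimpleGraph α) (H : SimpleGraph β)

@[simp] lemma cartProd_adj {p q : α × β} :
    (cartProd G H).Adj p q ↔ G.Adj p.1 q.1 ∧ p.2 = q.2 ∨ p.1 = q.1 ∧ H.Adj p.2 q.2 :=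
  Iff.rfl

@[simp] lemma lexProd_adj {p q : α × β} :
    (lexProd G H).Adj p q ↔ G.Adj p.1 q.1 ∨ p.1 = q.1 ∧ H.Adj p.2 q.2 :=
  Iff.rfl

variable [DecidableEq α] [DecidableEq β] [DecidableRel G.Adj] [DecidableRel H.Adj]

instance : DecidableRel (cartProd G H).Adj := fun _ _ => decidable_of_iff' _ (cartProd_adj G H)

instance : DecidableRel (lexProd G H).Adj := fun _ _ => decidable_of_iff' _ (lexProd_adj G H)

end Adj

section Counting

variable {α β : Type*} [Fintype α] [Fintype β] [DecidableEq α] [DecidableEq β]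
  (G : SimpleGraph α) (H : SimpleGraph β) [DecidableRel G.Adj] [DecidableRel H.Adj]

lemma neighborFinset_cartProd (x : α) (y : β) :
    (cartProd G H).neighborFinset (x, y) =
      G.neighborFinset x ×ˢ {y} ∪ {x} ×ˢ H.neighborFinset y := by
  ext ⟨x', y'⟩
  simp only [mem_neighborFinset, cartProd_adj, mem_union, mem_product, mem_singleton]
  tauto

lemma neighborFinset_lexProd (x : α) (y : β) :
    (lexProd G H).neighborFinset (x, y) =
      G.neighborFinset x ×ˢ univ ∪ {x} ×ˢ H.neighborFinset y := by
  ext ⟨x', y'⟩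
  simp only [mem_neighborFinset, lexProd_adj, mem_union, mem_product, mem_singleton, mem_univ,
    and_true]
  tauto

lemma degree_cartProd (x : α) (y : β) :
    (cartProd G H).degree (x, y) = G.degree x + H.degree y := by
  rw [← card_neighborFinset_eq_degree, neighborFinset_cartProd, card_union_of_disjoint
    (disjoint_product.2 (.inl (G.neighborFinset_disjoint_singleton x)))]
  simp

lemma degree_lexProd (x : α) (y : β) :
    (lexProd G H).degree (x, y) = G.degree x * Fintype.card β + H.degree y := by
  rw [← card_neighborFinset_eq_degree, neighborFinset_lexProd, card_union_of_disjoint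
    (disjoint_product.2 (.inl (G.neighborFinset_disjoint_singleton x)))]
  simp

lemma card_edgeFinset_cartProd :
    #(cartProd G H).edgeFinset =
      #G.edgeFinset * Fintype.card β + Fintype.card α * #H.edgeFinset := by
  have h := (sum_degrees_eq_twice_card_edges (cartProd G H)).symm
  simp only [Fintype.sum_prod_type, degree_cartProd, sum_add_distrib, sum_const, card_univ,
    smul_eq_mul, ← mul_sum] at h
  rw [sum_degrees_eq_twice_card_edges G, sum_degrees_eq_twice_card_edges H] at h
  linarith

lemma card_edgeFinset_lexProd :
    #(lexProd G H).edgeFinset =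
      #G.edgeFinset * Fintype.card β ^ 2 + Fintype.card α * #H.edgeFinset := by
  have h := (sum_degrees_eq_twice_card_edges (lexProd G H)).symm
  simp only [Fintype.sum_prod_type, degree_lexProd, sum_add_distrib, sum_const, card_univ,
    smul_eq_mul, ← mul_sum, ← sum_mul] at h
  rw [sum_degrees_eq_twice_card_edges G, sum_degrees_eq_twice_card_edges H] at h
  linarith

end Counting

theorem stmt_12_general {α β : Type} [Fintype α] [Fintype β] [Nontrivial α] [Nontrivial β]
    (G : SimpleGraph α) (H : SimpleGraph β) (hG : G.Connected) :
    ¬ Nonempty (cartProd G H ≃g lexProd G H) := by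
  classical
  rintro ⟨f⟩
  have hcard := f.card_edgeFinset_eq
  rw [card_edgeFinset_cartProd, card_edgeFinset_lexProd] at hcard
  have hβ : Fintype.card β < Fintype.card β ^ 2 := by
    have : 1 < Fintype.card β := Fintype.one_lt_card
    nlinarith
  have hlt := Nat.mul_lt_mul_of_pos_left hβ hG.preconnected.card_edgeFinset_pos
  omega

theorem stmt_12 {α β : Type} [Fintype α] [Fintype β] [Nontrivial α] [Nontrivial β]
    (G : SimpleGraph α) (H : SimpleGraph β) (hG : G.Connected) (hH : H.Connected) :
    ¬ Nonempty (cartProd G H ≃g lexProd G H) :=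
  stmt_12_general G H hG
end

section
/- Let G and H be finite simple connected graphs, each with at least two vertices. Then the Kronecker product G ⊗ H and the lexicographic product G ∘ H are not isomorphic. -/
open SimpleGraph

/-!
The Kronecker product is a spanning subgraph of the lexicographic product, and a proper one as
soon as `G` has an edge `x ~ x'` and `H` has a vertex `y`: the edge `(x, y) ~ (x', y)` of `G ∘ H`
is missing from `G ⊗ H` because `H` has no loops. A finite graph has strictly fewer edges than
any graph it is a proper spanning subgraph of, so the two products cannot be isomorphic.
-/

namespace SimpleGraph

theorem not_nonempty_iso_of_lt {V : Type*} [Finite V] {G₁ G₂ : SimpleGraph V} (h : G₁ < G₂) :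
    ¬ Nonempty (G₁ ≃g G₂) := by
  classical
  have := Fintype.ofFinite V
  rintro ⟨f⟩
  exact (Finset.card_lt_card (edgeFinset_strict_mono h)).ne f.card_edgeFinset_eq

variable {α β : Type*} (G : SimpleGraph α) (H : SimpleGraph β)

theorem tensorProd_le_lexProd : tensorProd G H ≤ lexProd G H :=
  fun _ _ h => Or.inl h.1

theorem tensorProd_lt_lexProd [Nonempty β] (hG : G ≠ ⊥) : tensorProd G H < lexProd G H := by
  obtain ⟨x, x', hxx'⟩ := ne_bot_iff_exists_adj.mp hG
  obtain ⟨y⟩ := ‹Nonempty β›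
  refine (tensorProd_le_lexProd G H).lt_of_ne fun h => ?_
  have hlex : (lexProd G H).Adj (x, y) (x', y) := Or.inl hxx'
  rw [← h] at hlex
  exact H.loopless.irrefl y hlex.2

end SimpleGraph

theorem stmt_14_general {α β : Type} [Fintype α] [Fintype β] [Nontrivial α] [Nontrivial β]
    (G : SimpleGraph α) (H : SimpleGraph β) (hG : G.Connected) :
    ¬ Nonempty (tensorProd G H ≃g lexProd G H) := by
  have hG_ne_bot : G ≠ ⊥ := fun h => not_connected_bot (h ▸ hG)
  exact not_nonempty_iso_of_lt (tensorProd_lt_lexProd G H hG_ne_bot)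

theorem stmt_14 {α β : Type} [Fintype α] [Fintype β] [Nontrivial α] [Nontrivial β]
    (G : SimpleGraph α) (H : SimpleGraph β) (hG : G.Connected) (hH : H.Connected) :
    ¬ Nonempty (tensorProd G H ≃g lexProd G H) :=
  stmt_14_general G H hG
end

section
/- Let G and H be finite simple connected graphs, each with at least two vertices. Then the strong product G ⊠ H is isomorphic to the lexicographic product G ∘ H if and only if H is a complete graph. -/
open SimpleGraph

/-! The proof compares edge counts: `G ⊠ H` is always a spanning subgraph of `G ∘ H`, so an
isomorphism between these finite graphs forces them to be equal. If `H` is not complete, pick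
non-adjacent `y ≠ y'` and an edge `x ~ x'` of `G`; then `(x, y)` and `(x', y')` are adjacent in
`G ∘ H` but not in `G ⊠ H`. If `H` is complete, the two products coincide. -/

theorem SimpleGraph.eq_of_le_of_iso {V : Type*} [Finite V] {G G' : SimpleGraph V} (hle : G ≤ G')
    (e : G ≃g G') : G = G' := by
  classical
  have := Fintype.ofFinite V
  by_contra hne
  have hlt : G.edgeFinset.card < G'.edgeFinset.card :=
    Finset.card_lt_card (edgeFinset_ssubset_edgeFinset.2 (lt_of_le_of_ne hle hne))
  exact hlt.ne e.card_edgeFinset_eq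

section Products

variable {α β : Type*} (G : SimpleGraph α) (H : SimpleGraph β)

theorem strongProd_le_lexProd : strongProd G H ≤ lexProd G H := by
  rintro p q (⟨hG, -⟩ | hH | ⟨hG, -⟩)
  · exact Or.inl hG
  · exact Or.inr hH
  · exact Or.inl hG

theorem strongProd_top : strongProd G (⊤ : SimpleGraph β) = lexProd G ⊤ := by
  refine le_antisymm (strongProd_le_lexProd G ⊤) ?_
  rintro p q (hG | hH)
  · by_cases hy : p.2 = q.2
    · exact Or.inl ⟨hG, hy⟩
    · exact Or.inr (Or.inr ⟨hG, hy⟩)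
  · exact Or.inr (Or.inl hH)

variable {G H}

theorem eq_top_of_lexProd_le_strongProd {x x' : α} (hx : G.Adj x x')
    (hle : lexProd G H ≤ strongProd G H) : H = ⊤ := by
  ext y y'
  refine ⟨H.ne_of_adj, fun hy => ?_⟩
  rcases hle (v := (x, y)) (w := (x', y')) (Or.inl hx) with ⟨-, rfl⟩ | ⟨rfl, -⟩ | ⟨-, hH⟩
  · exact absurd rfl hy
  · exact absurd hx (G.loopless.irrefl x)
  · exact hH

end Products

theorem stmt_15_general {α β : Type} [Fintype α] [Fintype β] [Nontrivial α]
    (G : SimpleGraph α) (H : SimpleGraph β) (hG : G.Connected) :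
    Nonempty (strongProd G H ≃g lexProd G H) ↔ H = ⊤ := by
  constructor
  · rintro ⟨e⟩
    obtain ⟨x⟩ := hG.nonempty
    obtain ⟨x', hx⟩ := hG.preconnected.exists_adj_of_nontrivial x
    exact eq_top_of_lexProd_le_strongProd hx (eq_of_le_of_iso (strongProd_le_lexProd G H) e).ge
  · rintro rfl
    rw [strongProd_top]
    exact ⟨Iso.refl⟩

theorem stmt_15 {α β : Type} [Fintype α] [Fintype β] [Nontrivial α] [Nontrivial β]
    (G : SimpleGraph α) (H : SimpleGraph β) (hG : G.Connected) (hH : H.Connected) :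
    Nonempty (strongProd G H ≃g lexProd G H) ↔ H = ⊤ :=
  stmt_15_general G H hG
end
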